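/- arXiv:1512.04863 — 5 statements merged into one kernel-verified Lean document; each statement's English description precedes it below -/
import Mathlib

section
/- Let U : ℝ → ℝ be a Lipschitz continuous function with Lipschitz constant G, and let N ⊂ ℝ be a Lebesgue negligible set. Then the derivative of U exists and vanishes at almost every point of the preimage U⁻¹(N). More precisely, for a.e. t ∈ U⁻¹(N), U is differentiable at t with U'(t) = 0. -/
/-!
Rademacher's theorem makes `U` differentiable almost everywhere. At a point where `U' ≠ 0`, `U`
expands distances by a definite factor near that point; hence the points of `U ⁻¹' N` with
`U' ≠ 0` form a countable union of pieces on each of which `U` is antilipschitz. Each piece is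
mapped into the null set `N`, so it is null itself.
-/

open MeasureTheory Set Filter Topology
open scoped NNReal

theorem HasDerivAt.exists_eventually_dist_le_mul {𝕜 F : Type*} [NontriviallyNormedField 𝕜]
    [NormedAddCommGroup F] [NormedSpace 𝕜 F] {f : 𝕜 → F} {f' : F} {x : 𝕜}
    (hf : HasDerivAt f f' x) (hf' : f' ≠ 0) :
    ∃ K : ℝ, ∀ᶠ y in 𝓝 x, dist y x ≤ K * dist (f y) (f x) := by
  obtain ⟨K, hK⟩ := (hf.isTheta_sub hf').isBigO_symm.bound
  exact ⟨K, by simpa [dist_eq_norm] using hK⟩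

section

variable {X Y : Type*} [MetricSpace X] [MetricSpace Y] [MeasurableSpace X] [BorelSpace X]
  [MeasurableSpace Y] [BorelSpace Y] {f : X → Y} {s : Set X} {d : ℝ}

theorem hausdorffMeasure_eq_zero_of_dist_le_mul_dist (hd : 0 ≤ d) {K : ℝ≥0}
    (h : ∀ x ∈ s, ∀ y ∈ s, dist x y ≤ K * dist (f x) (f y)) (hs : μH[d] (f '' s) = 0) :
    μH[d] s = 0 := by
  have hanti : AntilipschitzWith K (s.domRestrict f) :=
    AntilipschitzWith.of_le_mul_dist fun x y => h x x.2 y y.2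
  have himage := hanti.le_hausdorffMeasure_image hd univ
  rwa [image_univ, range_domRestrict, hs, mul_zero, nonpos_iff_eq_zero,
    ← isometry_subtype_coe.hausdorffMeasure_image (Or.inl hd), image_univ,
    Subtype.range_coe] at himage

theorem hausdorffMeasure_eq_zero_of_eventually_dist_le_mul_dist
    [TopologicalSpace.SeparableSpace X] (hd : 0 ≤ d)
    (h : ∀ x ∈ s, ∃ K : ℝ, ∀ᶠ y in 𝓝[s] x, dist y x ≤ K * dist (f y) (f x))
    (hs : μH[d] (f '' s) = 0) : μH[d] s = 0 := by
  set A : ℕ → ℕ → Set X := fun n m =>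
    {x ∈ s | ∀ y ∈ s, dist y x < 1 / (m + 1) → dist y x ≤ n * dist (f y) (f x)}
  obtain ⟨D, hDc, hDd⟩ := TopologicalSpace.exists_countable_dense X
  -- The pieces have diameter below `1 / (m + 1)`, so the bound at each point covers the whole piece.
  have hcover : s ⊆ ⋃ (n : ℕ) (m : ℕ) (q ∈ D), A n m ∩ Metric.ball q (1 / (2 * (m + 1))) := by
    intro x hx
    obtain ⟨K, hK⟩ := h x hx
    obtain ⟨m, -, hm⟩ := Metric.nhds_basis_ball_inv_nat_succ.eventually_iff.1
      (eventually_nhdsWithin_iff.1 hK)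
    obtain ⟨n, hn⟩ := exists_nat_ge K
    obtain ⟨q, hqD, hq⟩ := hDd.exists_dist_lt x (by positivity : (0 : ℝ) < 1 / (2 * (m + 1)))
    refine mem_iUnion₂.2 ⟨n, m, mem_iUnion₂.2 ⟨q, hqD, ⟨hx, fun y hy hyx => ?_⟩, hq⟩⟩
    exact (hm hyx hy).trans (by gcongr)
  refine measure_mono_null hcover <| measure_iUnion_null fun n => measure_iUnion_null fun m =>
    (measure_biUnion_null_iff hDc).2 fun q _ => ?_
  refine hausdorffMeasure_eq_zero_of_dist_le_mul_dist (K := n) hd (fun x hx y hy => ?_)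
    (measure_mono_null (image_mono fun x hx => hx.1.1) hs)
  have hxy : dist x y < 1 / (m + 1) := calc
    dist x y ≤ dist x q + dist y q := dist_triangle_right x y q
    _ < 1 / (2 * (m + 1)) + 1 / (2 * (m + 1)) := add_lt_add hx.2 hy.2
    _ = 1 / (m + 1) := by field_simp; ring
  simpa using hy.1.2 x hx.1.1 hxy

end

theorem ae_hasDerivAt_eq_zero_of_map_mem_null {f : ℝ → ℝ} {N : Set ℝ} (hN : volume N = 0) :
    ∀ᵐ x, f x ∈ N → ∀ c, HasDerivAt f c x → c = 0 := by
  rw [ae_iff, ← hausdorffMeasure_real]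
  refine hausdorffMeasure_eq_zero_of_eventually_dist_le_mul_dist (f := f) zero_le_one (fun x hx => ?_) ?_
  · obtain ⟨-, c, hc, hc0⟩ : f x ∈ N ∧ ∃ c, HasDerivAt f c x ∧ c ≠ 0 := by simpa using hx
    obtain ⟨K, hK⟩ := hc.exists_eventually_dist_le_mul hc0
    exact ⟨K, nhdsWithin_le_nhds hK⟩
  · rw [hausdorffMeasure_real]
    refine measure_mono_null ?_ hN
    rintro _ ⟨x, hx, rfl⟩
    exact (Classical.not_imp.1 hx).1

/-- If `U : ℝ → ℝ` is `G`-Lipschitz and `N` is Lebesgue negligible, then for a.e.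
point `t` of the preimage `U ⁻¹' N`, `U` is differentiable at `t` with derivative `0`. -/
theorem lipschitz_deriv_zero_ae_on_preimage_null
    (U : ℝ → ℝ) (G : NNReal) (hU : LipschitzWith G U)
    (N : Set ℝ) (hN : volume N = 0) :
    ∀ᵐ t ∂(volume.restrict (U ⁻¹' N)), HasDerivAt U 0 t := by
  obtain ⟨N', hNN', hN'meas, hN'⟩ := exists_measurable_superset_of_null hN
  refine ae_mono (Measure.restrict_mono (preimage_mono hNN') le_rfl)
    ((ae_restrict_iff' (hN'meas.preimage hU.continuous.measurable)).2 ?_)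
  filter_upwards [hU.ae_differentiableAt, ae_hasDerivAt_eq_zero_of_map_mem_null (f := U) hN']
    with t hdiff hzero htN
  simpa [hzero htN _ hdiff.hasDerivAt] using hdiff.hasDerivAt
end

section
/- Let u : ℝ² → ℝ be continuous, G > 0, and let γ : ℝ → ℝ be continuous. Define the sequence h₁ = 1/2, h_{n+1} = h_n - h_n². Assume that the map t ↦ u(t, γ(t)) is G-Lipschitz continuous. Fix t₀ and set x₀ = γ(t₀). Then the limit lim_{h→0⁺} (u(t₀+h, γ(t₀+h)) − u(t₀, x₀))/h exists if and only if the limit lim_{n→∞} (u(t₀+h_n, γ(t₀+h_n)) − u(t₀, x₀))/h_n exists, and in that case the two limits coincide. -/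
open Filter Topology Set

private lemma seq_pos_le_half (h : ℕ → ℝ) (h1 : h 1 = 1/2)
    (hrec : ∀ n, 1 ≤ n → h (n + 1) = h n - (h n)^2) :
    ∀ n, 1 ≤ n → 0 < h n ∧ h n ≤ 1/2 := by
  intro n hn
  induction n with
  | zero => omega
  | succ k ih =>
    rcases Nat.eq_zero_or_pos k with rfl | hk
    · rw [h1]; norm_num
    · obtain ⟨hk1, hk2⟩ := ih hk
      rw [hrec k hk]
      refine ⟨by nlinarith, by nlinarith⟩

private lemma seq_le_inv (h : ℕ → ℝ) (h1 : h 1 = 1/2)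
    (hrec : ∀ n, 1 ≤ n → h (n + 1) = h n - (h n)^2)
    (hps : ∀ n, 1 ≤ n → 0 < h n ∧ h n ≤ 1/2) :
    ∀ n, 1 ≤ n → h n ≤ 1/n := by
  intro n hn
  induction n with
  | zero => omega
  | succ k ih =>
    rcases Nat.eq_zero_or_pos k with rfl | hk
    · rw [h1]; norm_num
    · obtain ⟨hk1, hk2⟩ := hps k hk
      have hb := ih hk
      have hkr : (1:ℝ) ≤ (k:ℝ) := by exact_mod_cast hk
      rw [hrec k hk]
      push_cast
      rw [le_div_iff₀ (by positivity)] at hb ⊢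
      nlinarith [sq_nonneg (h k * k - 1), sq_nonneg (h k), mul_pos hk1 hk1]

private lemma quot_diff_bound (G : NNReal) (f : ℝ → ℝ) (hLip : LipschitzWith G f) (t₀ : ℝ) :
    ∀ s t : ℝ, 0 < s → s ≤ t →
      |(f (t₀+s) - f t₀)/s - (f (t₀+t) - f t₀)/t| ≤ 2*G*(t-s)/s := by
  intro s t hs hst
  have ht : 0 < t := lt_of_lt_of_le hs hst
  have l1 : |f (t₀+s) - f (t₀+t)| ≤ G*(t-s) := by
    have := hLip.dist_le_mul (t₀+s) (t₀+t)
    rw [Real.dist_eq, Real.dist_eq] at this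
    calc |f (t₀+s) - f (t₀+t)| ≤ G * |(t₀+s) - (t₀+t)| := this
      _ = G*(t-s) := by rw [abs_of_nonpos (by linarith)]; ring
  have l2 : |f (t₀+t) - f t₀| ≤ G*t := by
    have := hLip.dist_le_mul (t₀+t) t₀
    rw [Real.dist_eq, Real.dist_eq] at this
    calc |f (t₀+t) - f t₀| ≤ G * |(t₀+t) - t₀| := this
      _ = G*t := by rw [show t₀+t-t₀ = t by ring, abs_of_pos ht]
  have e : (f (t₀+s) - f t₀)/s - (f (t₀+t) - f t₀)/t
      = (f (t₀+s) - f (t₀+t))/s + (f (t₀+t) - f t₀) * ((t-s)/(s*t)) := by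
    field_simp; ring
  rw [e]
  have b1 : |(f (t₀+s) - f (t₀+t))/s| ≤ G*(t-s)/s := by
    rw [abs_div, abs_of_pos hs]
    gcongr
  have b2 : |(f (t₀+t) - f t₀) * ((t-s)/(s*t))| ≤ G*(t-s)/s := by
    rw [abs_mul, abs_div, abs_of_nonneg (by linarith : (0:ℝ) ≤ t-s), abs_of_pos (mul_pos hs ht)]
    have : |f (t₀+t) - f t₀| * ((t-s)/(s*t)) ≤ (G*t) * ((t-s)/(s*t)) := by
      apply mul_le_mul_of_nonneg_right l2 (div_nonneg (by linarith) (by positivity))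
    calc |f (t₀+t) - f t₀| * ((t-s)/(s*t)) ≤ (G*t) * ((t-s)/(s*t)) := this
      _ = G*(t-s)/s := by field_simp
  calc |(f (t₀+s) - f (t₀+t))/s + (f (t₀+t) - f t₀) * ((t-s)/(s*t))|
      ≤ |(f (t₀+s) - f (t₀+t))/s| + |(f (t₀+t) - f t₀) * ((t-s)/(s*t))| := abs_add_le _ _
    _ ≤ G*(t-s)/s + G*(t-s)/s := add_le_add b1 b2
    _ = 2*G*(t-s)/s := by ring

/-- Discretization of the limit of difference quotients along the sequence
`h₁ = 1/2`, `h_{n+1} = h_n - h_n²`: if `t ↦ u(t, γ(t))` is `G`-Lipschitz, then the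
right limit of the difference quotients at `t₀` exists with value `L` iff the limit
along the sequence `h_n` exists with the same value `L`. -/
theorem diff_quotient_limit_discretization
    (u : ℝ × ℝ → ℝ) (hu : Continuous u) (G : NNReal) (hG : 0 < (G : ℝ))
    (γ : ℝ → ℝ) (hγ : Continuous γ)
    (hLip : LipschitzWith G (fun t => u (t, γ t)))
    (h : ℕ → ℝ) (h1 : h 1 = 1/2) (hrec : ∀ n, 1 ≤ n → h (n + 1) = h n - (h n)^2)
    (t₀ : ℝ) (L : ℝ) :
    Tendsto (fun s : ℝ => (u (t₀ + s, γ (t₀ + s)) - u (t₀, γ t₀)) / s)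
        (𝓝[>] 0) (𝓝 L)
      ↔ Tendsto (fun n : ℕ => (u (t₀ + h n, γ (t₀ + h n)) - u (t₀, γ t₀)) / h n)
        atTop (𝓝 L) := by
  classical
  set f : ℝ → ℝ := fun t => u (t, γ t) with hf
  set D : ℝ → ℝ := fun s => (f (t₀ + s) - f t₀) / s with hD
  have hps := seq_pos_le_half h h1 hrec
  have hinv := seq_le_inv h h1 hrec hps
  -- anti-monotonicity
  have hanti : ∀ m n, 1 ≤ m → m ≤ n → h n ≤ h m := by
    intro m n hm hmn
    induction n with
    | zero => omega
    | succ k ih =>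
      rcases Nat.lt_or_ge m (k+1) with hlt | hge
      · have hk : 1 ≤ k := by omega
        have := ih (by omega)
        have hk1 := (hps k hk).1
        rw [hrec k hk]
        nlinarith [sq_nonneg (h k)]
      · have : m = k + 1 := by omega
        rw [this]
  -- h n → 0
  have htend : Tendsto h atTop (𝓝 0) := by
    rw [Metric.tendsto_atTop]
    intro ε hε
    obtain ⟨N, hN⟩ := exists_nat_gt (1/ε)
    refine ⟨N + 1, fun n hn => ?_⟩
    have hn1 : 1 ≤ n := by omega
    have h1n := hinv n hn1
    have hpn := (hps n hn1).1
    rw [Real.dist_eq, sub_zero, abs_of_pos hpn]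
    have hnN : (N:ℝ) < (n:ℝ) := by exact_mod_cast Nat.lt_of_lt_of_le (Nat.lt_succ_self N) hn
    have hNpos : (0:ℝ) < (n:ℝ) := by positivity
    have : 1/ε < (n:ℝ) := lt_trans hN hnN
    calc h n ≤ 1/(n:ℝ) := h1n
      _ < ε := by rw [div_lt_iff₀ hNpos]; rw [div_lt_iff₀ hε] at this; linarith
  constructor
  · -- easy direction
    intro H
    have htend0 : Tendsto h atTop (𝓝[>] (0:ℝ)) := by
      apply tendsto_nhdsWithin_of_tendsto_nhds_of_eventually_within _ htend
      filter_upwards [eventually_ge_atTop 1] with n hn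
      exact (hps n hn).1
    exact H.comp htend0
  · -- hard direction
    intro H
    rw [Metric.tendsto_nhdsWithin_nhds]
    intro ε hε
    rw [Metric.tendsto_atTop] at H
    obtain ⟨N₁, hN₁⟩ := H (ε/2) (by linarith)
    -- choose N₂ with 4*G*h n < ε/2 for n ≥ N₂
    have htend' : Tendsto (fun n => 4*(G:ℝ)*h n) atTop (𝓝 0) := by
      have := htend.const_mul (4*(G:ℝ))
      simpa using this
    rw [Metric.tendsto_atTop] at htend'
    obtain ⟨N₂, hN₂⟩ := htend' (ε/2) (by linarith)
    set N := max (max N₁ N₂) 1 with hN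
    have hN1 : 1 ≤ N := le_max_right _ _
    refine ⟨h (N+1), (hps (N+1) (by omega)).1, ?_⟩
    intro s hs hds
    rw [Real.dist_eq, sub_zero, abs_of_pos hs] at hds
    -- find minimal n with h n < s
    have hex : ∃ n, 1 ≤ n ∧ h n < s := by
      rw [Metric.tendsto_atTop] at htend
      obtain ⟨M, hM⟩ := htend s hs
      refine ⟨max M 1, le_max_right _ _, ?_⟩
      have := hM (max M 1) (le_max_left _ _)
      rw [Real.dist_eq, sub_zero] at this
      exact lt_of_abs_lt this
    have hP : ∃ k, 1 ≤ k ∧ h k < s := hex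
    have spec := Nat.find_spec hP
    have minim : ∀ k, k < Nat.find hP → ¬(1 ≤ k ∧ h k < s) := fun k hk => Nat.find_min hP hk
    set n₀ := Nat.find hP with hn₀
    obtain ⟨hn₀1, hn₀lt⟩ := spec
    have hn₀2 : 2 ≤ n₀ := by
      by_contra hc
      have he : n₀ = 1 := by omega
      rw [he] at hn₀lt
      have : h (N+1) ≤ h 1 := hanti 1 (N+1) le_rfl (by omega)
      linarith
    set m := n₀ - 1 with hm
    have hm1 : 1 ≤ m := by omega
    have hms : s ≤ h m := by
      by_contra hc
      push_neg at hc
      exact minim m (by omega) ⟨hm1, hc⟩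
    have hm1lt : h (m+1) < s := by
      have he : m + 1 = n₀ := by omega
      rw [he]; exact hn₀lt
    -- m ≥ N + 1 hence m ≥ N₁, N₂
    have hmN : N + 1 ≤ m := by
      by_contra hc
      push_neg at hc
      have : h (N+1) ≤ h (m+1) := hanti (m+1) (N+1) (by omega) (by omega)
      linarith
    have hNle : N₁ ≤ N ∧ N₂ ≤ N :=
      ⟨le_trans (le_max_left N₁ N₂) (le_max_left _ 1),
       le_trans (le_max_right N₁ N₂) (le_max_left _ 1)⟩
    have hmN₁ : N₁ ≤ m := le_trans hNle.1 (Nat.le_of_succ_le hmN)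
    have hmN₂ : N₂ ≤ m := le_trans hNle.2 (Nat.le_of_succ_le hmN)
    -- bound |D s - D (h m)|
    have hpm := (hps m hm1).1
    have hpm2 := (hps m hm1).2
    have key := quot_diff_bound G f hLip t₀ s (h m) hs hms
    have hsm1 : h (m+1) = h m - (h m)^2 := hrec m hm1
    have hstep : h m - s ≤ (h m)^2 := by
      have : h (m+1) < s := hm1lt
      rw [hsm1] at this; linarith
    have hbd : 2*(G:ℝ)*(h m - s)/s ≤ 4*(G:ℝ)*h m := by
      rw [div_le_iff₀ hs]
      have h2 : h m - s ≤ (h m)^2 := hstep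
      have hs2 : h m - (h m)^2 < s := by rw [← hsm1]; exact hm1lt
      have hGnn : (0:ℝ) ≤ (G:ℝ) := G.2
      have hsq : (h m)^2 ≤ h m / 2 := by nlinarith
      have h2s : h m < 2*s := by linarith
      nlinarith [mul_nonneg (mul_nonneg hGnn hpm.le) (by linarith : (0:ℝ) ≤ 2*s - h m),
        mul_le_mul_of_nonneg_left h2 hGnn]
    have hDm := hN₁ m hmN₁
    rw [Real.dist_eq] at hDm
    have hGm := hN₂ m hmN₂
    rw [Real.dist_eq, sub_zero] at hGm
    have hGm' : 4*(G:ℝ)*h m < ε/2 := by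
      have := le_abs_self (4*(G:ℝ)*h m)
      linarith
    rw [Real.dist_eq]
    have hDs : |D s - D (h m)| ≤ 2*(G:ℝ)*(h m - s)/s := key
    have hfinal : |D s - L| < ε := by
      calc |D s - L| ≤ |D s - D (h m)| + |D (h m) - L| := abs_sub_le _ _ _
        _ ≤ 2*(G:ℝ)*(h m - s)/s + |D (h m) - L| := by linarith
        _ < 4*(G:ℝ)*h m + ε/2 := by
            have : |D (h m) - L| < ε/2 := hDm
            linarith
        _ < ε := by linarith
    exact hfinal
end

section
/- Let m be a nonnegative atomless (continuous) finite Borel measure on ℝ and define h(y) = y + m((−∞,y]). Then h is a continuous, strictly increasing bijection from ℝ onto ℝ, and for every interval [a,b], (h_♯ m)([a,b]) ≤ b − a. -/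
open MeasureTheory Set Filter Topology Function

/-- For a finite nonnegative atomless Borel measure `m` on `ℝ`, the function
`h(y) = y + m((-∞,y])` is a continuous strictly increasing bijection of `ℝ`
onto `ℝ`, and the pushforward measure satisfies `(h_♯ m)([a,b]) ≤ b - a` for
every interval `[a,b]`. -/
theorem atomless_cumulative_bijection_pushforward_bound
    (m : Measure ℝ) [IsFiniteMeasure m] (hatomless : ∀ y : ℝ, m {y} = 0)
    (h : ℝ → ℝ) (hdef : ∀ y, h y = y + (m (Iic y)).toReal) :
    Continuous h ∧ StrictMono h ∧ Function.Bijective h ∧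
    ∀ a b : ℝ, Measure.map h m (Icc a b) ≤ ENNReal.ofReal (b - a) := by
  set F : ℝ → ℝ := fun y => (m (Iic y)).toReal with hF
  have hfin : ∀ s : Set ℝ, m s ≠ ⊤ := fun s => measure_ne_top m s
  have hFmono : Monotone F := fun x y hxy =>
    ENNReal.toReal_le_toReal (hfin _) (hfin _) |>.mpr (measure_mono (Iic_subset_Iic.2 hxy))
  -- Continuity of F at every point
  have hFcont : Continuous F := by
    rw [continuous_iff_continuousAt]
    intro x
    rw [hFmono.continuousAt_iff_leftLim_eq_rightLim]
    -- left limit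
    have hleft : Function.leftLim F x = F x := by
      have hu : Tendsto (fun n : ℕ => x - 1 / (n + 1)) atTop (𝓝[<] x) := by
        apply tendsto_nhdsWithin_of_tendsto_nhds_of_eventually_within
        · have : Tendsto (fun n : ℕ => 1 / ((n : ℝ) + 1)) atTop (𝓝 0) :=
            tendsto_one_div_add_atTop_nhds_zero_nat
          have := Filter.Tendsto.sub (tendsto_const_nhds (x := x)) this
          simpa using this
        · filter_upwards with n
          have : (0 : ℝ) < 1 / ((n : ℝ) + 1) := by positivity
          simp only [mem_Iio]
          linarith
      have hmono : Monotone fun n : ℕ => Iic (x - 1 / (n + 1)) := by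
        intro i j hij
        apply Iic_subset_Iic.2
        have hij' : (i : ℝ) + 1 ≤ (j : ℝ) + 1 := by exact_mod_cast by omega
        have h1 : 1 / ((j : ℝ) + 1) ≤ 1 / ((i : ℝ) + 1) :=
          one_div_le_one_div_of_le (by positivity) hij'
        linarith
      have hUnion : (⋃ n : ℕ, Iic (x - 1 / ((n : ℝ) + 1))) = Iio x := by
        apply Subset.antisymm
        · refine iUnion_subset fun n y hy => ?_
          have : (0 : ℝ) < 1 / ((n : ℝ) + 1) := by positivity
          simp only [mem_Iic] at hy
          simp only [mem_Iio]; linarith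
        · intro y hy
          simp only [mem_Iio] at hy
          obtain ⟨n, hn⟩ := exists_nat_one_div_lt (show (0:ℝ) < x - y by linarith)
          exact mem_iUnion.2 ⟨n, by simp only [mem_Iic]; linarith⟩
      have hmt : Tendsto (fun n : ℕ => m (Iic (x - 1 / (n + 1)))) atTop (𝓝 (m (Iic x))) := by
        have := tendsto_measure_iUnion_atTop (μ := m) hmono
        rw [hUnion] at this
        rwa [measure_congr (Iio_ae_eq_Iic' (hatomless x))] at this
      have hFt : Tendsto (fun n : ℕ => F (x - 1 / (n + 1))) atTop (𝓝 (F x)) :=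
        (ENNReal.tendsto_toReal (hfin _)).comp hmt
      have hFl : Tendsto (fun n : ℕ => F (x - 1 / (n + 1))) atTop (𝓝 (Function.leftLim F x)) :=
        (hFmono.tendsto_leftLim x).comp hu
      exact tendsto_nhds_unique hFl hFt
    -- right limit
    have hright : Function.rightLim F x = F x := by
      have hu : Tendsto (fun n : ℕ => x + 1 / (n + 1)) atTop (𝓝[>] x) := by
        apply tendsto_nhdsWithin_of_tendsto_nhds_of_eventually_within
        · have : Tendsto (fun n : ℕ => 1 / ((n : ℝ) + 1)) atTop (𝓝 0) :=
            tendsto_one_div_add_atTop_nhds_zero_nat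
          have := Filter.Tendsto.add (tendsto_const_nhds (x := x)) this
          simpa using this
        · filter_upwards with n
          have : (0 : ℝ) < 1 / ((n : ℝ) + 1) := by positivity
          simp only [mem_Ioi]
          linarith
      have hanti : Antitone fun n : ℕ => Iic (x + 1 / (n + 1)) := by
        intro i j hij
        apply Iic_subset_Iic.2
        have hij' : (i : ℝ) + 1 ≤ (j : ℝ) + 1 := by exact_mod_cast by omega
        have h1 : 1 / ((j : ℝ) + 1) ≤ 1 / ((i : ℝ) + 1) :=
          one_div_le_one_div_of_le (by positivity) hij'
        linarith
      have hInter : (⋂ n : ℕ, Iic (x + 1 / ((n : ℝ) + 1))) = Iic x := by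
        apply Subset.antisymm
        · intro y hy
          simp only [mem_iInter, mem_Iic] at hy ⊢
          by_contra hxy
          push_neg at hxy
          obtain ⟨n, hn⟩ := exists_nat_one_div_lt (show (0:ℝ) < y - x by linarith)
          have := hy n
          linarith
        · intro y hy
          simp only [mem_Iic] at hy
          refine mem_iInter.2 fun n => ?_
          have : (0 : ℝ) < 1 / ((n : ℝ) + 1) := by positivity
          simp only [mem_Iic]; linarith
      have hmt : Tendsto (fun n : ℕ => m (Iic (x + 1 / (n + 1)))) atTop (𝓝 (m (Iic x))) := by
        have := tendsto_measure_iInter_atTop (μ := m)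
          (fun n => (measurableSet_Iic).nullMeasurableSet) hanti ⟨0, hfin _⟩
        rwa [hInter] at this
      have hFt : Tendsto (fun n : ℕ => F (x + 1 / (n + 1))) atTop (𝓝 (F x)) :=
        (ENNReal.tendsto_toReal (hfin _)).comp hmt
      have hFr : Tendsto (fun n : ℕ => F (x + 1 / (n + 1))) atTop
          (𝓝 (Function.rightLim F x)) :=
        (hFmono.tendsto_rightLim x).comp hu
      exact tendsto_nhds_unique hFr hFt
    rw [hleft, hright]
  have hheq : h = fun y => y + F y := funext hdef
  have hcont : Continuous h := by
    rw [hheq]; exact continuous_id.add hFcont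
  have hsm : StrictMono h := by
    intro x y hxy
    rw [hdef x, hdef y]
    have := hFmono hxy.le
    linarith
  have hF0 : ∀ y, 0 ≤ F y := fun y => ENNReal.toReal_nonneg
  have hFbd : ∀ y, F y ≤ (m univ).toReal := fun y =>
    ENNReal.toReal_le_toReal (hfin _) (hfin _) |>.mpr (measure_mono (subset_univ _))
  have hsurj : Function.Surjective h := by
    apply hcont.surjective
    · apply tendsto_atTop_mono (fun y => ?_) tendsto_id
      rw [hdef y]; have := hF0 y; simpa using this
    · apply tendsto_atBot_mono (fun y => ?_) (tendsto_atBot_add_const_right _ ((m univ).toReal)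
        tendsto_id)
      rw [hdef y]
      have := hFbd y
      simp only [id_eq]
      linarith
  refine ⟨hcont, hsm, ⟨hsm.injective, hsurj⟩, fun a b => ?_⟩
  set e := StrictMono.orderIsoOfSurjective h hsm hsurj with he
  have hecoe : ∀ x, e x = h x := fun x => rfl
  rw [Measure.map_apply hcont.measurable measurableSet_Icc]
  have hpre : h ⁻¹' Icc a b = Icc (e.symm a) (e.symm b) := by
    ext x
    simp only [mem_preimage, mem_Icc, ← hecoe]
    constructor
    · rintro ⟨h1, h2⟩
      exact ⟨by simpa using e.symm.monotone h1, by simpa using e.symm.monotone h2⟩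
    · rintro ⟨h1, h2⟩
      have h1' := e.monotone h1
      have h2' := e.monotone h2
      simp only [OrderIso.apply_symm_apply] at h1' h2'
      exact ⟨h1', h2'⟩
  rw [hpre]
  set c := e.symm a
  set d := e.symm b
  rcases le_or_gt c d with hcd | hcd
  · have hIcc : m (Icc c d) = m (Ioc c d) := (measure_congr (Ioc_ae_eq_Icc' (hatomless c))).symm
    have hsplit : m (Iic c) + m (Ioc c d) = m (Iic d) := by
      rw [← measure_union (by
        rw [Set.disjoint_left]
        rintro x hx ⟨h1, _⟩
        exact absurd hx (not_le.2 h1)) measurableSet_Ioc, Iic_union_Ioc_eq_Iic hcd]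
    have hha : h c = a := e.apply_symm_apply a
    have hhb : h d = b := e.apply_symm_apply b
    have hab : a ≤ b := by
      rw [← hha, ← hhb]; exact hsm.monotone hcd
    have hFc : c + F c = a := by rw [← hdef c]; exact hha
    have hFd : d + F d = b := by rw [← hdef d]; exact hhb
    have htoReal : (m (Ioc c d)).toReal = F d - F c := by
      have := congrArg ENNReal.toReal hsplit
      rw [ENNReal.toReal_add (hfin _) (hfin _)] at this
      simp only [hF] at this ⊢
      linarith
    rw [hIcc]
    rw [ENNReal.le_ofReal_iff_toReal_le (hfin _) (by linarith : (0:ℝ) ≤ b - a)]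
    rw [htoReal]
    linarith
  · have : Icc c d = ∅ := Icc_eq_empty (not_le.mpr hcd)
    rw [this]
    simp
end

section
/- Let λ : ℝ² → ℝ be continuous and G, L > 0. Suppose u : ℝ² → ℝ is continuous, and (γ_k) is a sequence of curves γ_k : [a,b] → ℝ with γ_k(t₀) = x₀, each satisfying γ_k'(s) = λ_k(s, γ_k(s)) where λ_k = f'(u_k) for continuous u_k → u uniformly with f ∈ C², and such that t ↦ u_k(t, γ_k(t)) is G-Lipschitz. If γ_k → γ uniformly, then γ satisfies γ'(s) = f'(u(s, γ(s))) and t ↦ u(t, γ(t)) is G-Lipschitz continuous. -/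
/-!
The Lipschitz bound makes `q ↦ u_k(q, γ_k q)` continuous, so every `γ_k`, a primitive of a
continuous function, is continuous, and so is the uniform limit `γ`. The graph of `γ` over
`[a,b]` is therefore compact, and for large `k` the points `(q, γ_k q)` stay in its closed
`1`-neighbourhood, a compact set on which `u_k → u` uniformly and `u` is uniformly continuous.
Hence `u_k(q, γ_k q) → u(q, γ q)`, and with it the speed `f'(u_k(q, γ_k q))`, uniformly on
`[a,b]`; both the integral equations and the Lipschitz estimates pass to the limit.
-/

open Set Filter Topology intervalIntegral Metric

section UniformComposition

variable {ι X Y Z : Type*} {l : Filter ι} {s : Set X}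

theorem TendstoUniformlyOn.id_prodMk [PseudoMetricSpace X] [PseudoMetricSpace Y]
    {g : ι → X → Y} {g₀ : X → Y} (hg : TendstoUniformlyOn g g₀ l s) :
    TendstoUniformlyOn (fun i x => (x, g i x)) (fun x => (x, g₀ x)) l s := by
  rw [Metric.tendstoUniformlyOn_iff] at hg ⊢
  intro ε hε
  filter_upwards [hg ε hε] with i hi x hx
  simpa [Prod.dist_eq, hε.le] using hi x hx

variable [PseudoMetricSpace Y] {g : ι → X → Y} {g₀ : X → Y}

theorem TendstoUniformlyOn.eventually_mapsTo_cthickening (hg : TendstoUniformlyOn g g₀ l s) :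
    ∀ᶠ i in l, MapsTo (g i) s (cthickening 1 (g₀ '' s)) := by
  filter_upwards [Metric.tendstoUniformlyOn_iff.mp hg 1 one_pos] with i hi x hx
  exact mem_cthickening_of_dist_le _ _ _ _ (mem_image_of_mem g₀ hx)
    (dist_comm (g₀ x) _ ▸ hi x hx).le

variable [ProperSpace Y] [PseudoMetricSpace Z]

theorem Continuous.comp_tendstoUniformlyOn_of_isBounded {F : Y → Z} (hF : Continuous F)
    (hg : TendstoUniformlyOn g g₀ l s) (hbdd : Bornology.IsBounded (g₀ '' s)) :
    TendstoUniformlyOn (fun i x => F (g i x)) (fun x => F (g₀ x)) l s :=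
  ((isCompact_of_isClosed_isBounded isClosed_cthickening hbdd.cthickening)
    |>.uniformContinuousOn_of_continuous hF.continuousOn).comp_tendstoUniformlyOn_eventually
      hg.eventually_mapsTo_cthickening
      (fun _ hx => self_subset_cthickening _ (mem_image_of_mem g₀ hx)) hg

theorem TendstoLocallyUniformly.comp_tendstoUniformlyOn_of_isBounded {F : ι → Y → Z}
    {F₀ : Y → Z} (hF : TendstoLocallyUniformly F F₀ l) (hF₀ : Continuous F₀)
    (hg : TendstoUniformlyOn g g₀ l s) (hbdd : Bornology.IsBounded (g₀ '' s)) :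
    TendstoUniformlyOn (fun i x => F i (g i x)) (fun x => F₀ (g₀ x)) l s := by
  have hK : IsCompact (cthickening 1 (g₀ '' s)) :=
    isCompact_of_isClosed_isBounded isClosed_cthickening hbdd.cthickening
  have hF_K := Metric.tendstoUniformlyOn_iff.mp
    (tendstoLocallyUniformly_iff_forall_isCompact.mp hF _ hK)
  have hF₀_g := Metric.tendstoUniformlyOn_iff.mp (hF₀.comp_tendstoUniformlyOn_of_isBounded hg hbdd)
  rw [Metric.tendstoUniformlyOn_iff]
  intro ε hε
  filter_upwards [hF₀_g (ε / 2) (half_pos hε), hF_K (ε / 2) (half_pos hε),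
    hg.eventually_mapsTo_cthickening] with i hlim hunif hmaps x hx
  calc dist (F₀ (g₀ x)) (F i (g i x))
      ≤ dist (F₀ (g₀ x)) (F₀ (g i x)) + dist (F₀ (g i x)) (F i (g i x)) := dist_triangle _ _ _
    _ < ε / 2 + ε / 2 := add_lt_add (hlim x hx) (hunif _ (hmaps hx))
    _ = ε := add_halves ε

end UniformComposition

section IntegralEquation

variable {E : Type*} [NormedAddCommGroup E] [NormedSpace ℝ E] {a b : ℝ}

theorem continuousOn_Icc_of_sub_eq_integral {γ F : ℝ → E} (hF : ContinuousOn F (Icc a b))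
    (h : ∀ r ∈ Icc a b, ∀ s ∈ Icc a b, γ r - γ s = ∫ q in s..r, F q) :
    ContinuousOn γ (Icc a b) := by
  intro r hr
  have hab : a ≤ b := hr.1.trans hr.2
  have hprimitive : ContinuousOn (fun r => ∫ q in a..r, F q) (Icc a b) := by
    rw [← uIcc_of_le hab] at hF ⊢
    exact continuousOn_primitive_interval hF.integrableOn_uIcc
  refine ((continuousOn_const (c := γ a)).add hprimitive).congr (fun x hx => ?_) r hr
  rw [Pi.add_apply, ← h x hx a (left_mem_Icc.2 hab), add_sub_cancel]

theorem sub_eq_integral_of_tendstoUniformlyOn {ι : Type*} {l : Filter ι} [l.NeBot]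
    [l.IsCountablyGenerated] {γ : ι → ℝ → E} {γ₀ : ℝ → E} {F : ι → ℝ → E} {F₀ : ℝ → E}
    (hF : ∀ i, ContinuousOn (F i) (Icc a b)) (hF₀ : TendstoUniformlyOn F F₀ l (Icc a b))
    (hγ₀ : ∀ x ∈ Icc a b, Tendsto (γ · x) l (𝓝 (γ₀ x)))
    (h : ∀ i, ∀ r ∈ Icc a b, ∀ s ∈ Icc a b, γ i r - γ i s = ∫ q in s..r, F i q) :
    ∀ r ∈ Icc a b, ∀ s ∈ Icc a b, γ₀ r - γ₀ s = ∫ q in s..r, F₀ q := by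
  intro r hr s hs
  have hsub : uIcc s r ⊆ Icc a b := uIcc_subset_Icc hs hr
  exact tendsto_nhds_unique (((hγ₀ r hr).sub (hγ₀ s hs)).congr fun i => h i r hr s hs)
    ((hF₀.mono hsub).tendsto_intervalIntegral_of_continuousOn
      (Eventually.of_forall fun i => (hF i).mono hsub))

end IntegralEquation

theorem characteristic_limit_lipschitz_general
    (f : ℝ → ℝ) (hf : ContDiff ℝ 2 f)
    (a b : ℝ)
    (G : ℝ)
    (u : ℝ × ℝ → ℝ) (hu : Continuous u)
    (uk : ℕ → ℝ × ℝ → ℝ)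
    (hconv : TendstoLocallyUniformly uk u atTop)
    (γk : ℕ → ℝ → ℝ) (γ : ℝ → ℝ)
    (hchar : ∀ k, ∀ r ∈ Icc a b, ∀ s ∈ Icc a b,
      γk k r - γk k s = ∫ q in s..r, deriv f (uk k (q, γk k q)))
    (hLip : ∀ k, ∀ t ∈ Icc a b, ∀ s ∈ Icc a b,
      |uk k (t, γk k t) - uk k (s, γk k s)| ≤ G * |t - s|)
    (hγconv : TendstoUniformlyOn γk γ atTop (Icc a b)) :
    (∀ r ∈ Icc a b, ∀ s ∈ Icc a b,
      γ r - γ s = ∫ q in s..r, deriv f (u (q, γ q))) ∧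
    (∀ t ∈ Icc a b, ∀ s ∈ Icc a b,
      |u (t, γ t) - u (s, γ s)| ≤ G * |t - s|) := by
  have hf' : Continuous (deriv f) := hf.continuous_deriv one_le_two
  have hspeed : ∀ k, ContinuousOn (fun q => deriv f (uk k (q, γk k q))) (Icc a b) := fun k =>
    hf'.comp_continuousOn (LipschitzOnWith.of_dist_le' fun x hx y hy => by
      simpa only [Real.dist_eq] using hLip k x hx y hy).continuousOn
  have hγ : ContinuousOn γ (Icc a b) := hγconv.continuousOn
    (Frequently.of_forall fun k => continuousOn_Icc_of_sub_eq_integral (hspeed k) (hchar k))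
  have hgraph : ContinuousOn (fun q => (q, γ q)) (Icc a b) := continuousOn_id.prodMk hγ
  have hu_along : TendstoUniformlyOn (fun k q => uk k (q, γk k q)) (fun q => u (q, γ q))
      atTop (Icc a b) := hconv.comp_tendstoUniformlyOn_of_isBounded hu hγconv.id_prodMk
    (isCompact_Icc.image_of_continuousOn hgraph).isBounded
  refine ⟨sub_eq_integral_of_tendstoUniformlyOn hspeed
    (hf'.comp_tendstoUniformlyOn_of_isBounded hu_along
      (isCompact_Icc.image_of_continuousOn (hu.comp_continuousOn hgraph)).isBounded)
    (fun x hx => hγconv.tendsto_at hx) hchar, fun t ht s hs => ?_⟩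
  exact le_of_tendsto' ((hu_along.tendsto_at ht).sub (hu_along.tendsto_at hs)).abs
    fun k => hLip k t ht s hs

/-- Stability of characteristics with Lipschitz values: if `u_k → u` locally uniformly,
`γ_k` are characteristics of `u_k` (in integral form, with speed `f'(u_k)`) through
`(t₀,x₀)` along which `u_k` is `G`-Lipschitz, and `γ_k → γ` uniformly on `[a,b]`,
then `γ` is a characteristic of `u` and `t ↦ u(t, γ(t))` is `G`-Lipschitz. -/
theorem characteristic_limit_lipschitz
    (f : ℝ → ℝ) (hf : ContDiff ℝ 2 f)
    (a b : ℝ) (hab : a ≤ b) (t₀ x₀ : ℝ) (ht₀ : t₀ ∈ Icc a b)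
    (G L : ℝ) (hG : 0 < G) (hL : 0 < L)
    (u : ℝ × ℝ → ℝ) (hu : Continuous u)
    (uk : ℕ → ℝ × ℝ → ℝ) (huk : ∀ k, Continuous (uk k))
    (hconv : TendstoLocallyUniformly uk u atTop)
    (γk : ℕ → ℝ → ℝ) (γ : ℝ → ℝ)
    (hpt : ∀ k, γk k t₀ = x₀)
    (hchar : ∀ k, ∀ r ∈ Icc a b, ∀ s ∈ Icc a b,
      γk k r - γk k s = ∫ q in s..r, deriv f (uk k (q, γk k q)))
    (hLip : ∀ k, ∀ t ∈ Icc a b, ∀ s ∈ Icc a b,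
      |uk k (t, γk k t) - uk k (s, γk k s)| ≤ G * |t - s|)
    (hγconv : TendstoUniformlyOn γk γ atTop (Icc a b)) :
    (∀ r ∈ Icc a b, ∀ s ∈ Icc a b,
      γ r - γ s = ∫ q in s..r, deriv f (u (q, γ q))) ∧
    (∀ t ∈ Icc a b, ∀ s ∈ Icc a b,
      |u (t, γ t) - u (s, γ s)| ≤ G * |t - s|) :=
  characteristic_limit_lipschitz_general f hf a b G u hu uk hconv γk γ hchar hLip hγconv
end

section
/- Let u : [t₁, t₂] → ℝ be continuous, G > 0, and let O ⊆ [t₁, t₂] be an open subset such that for all Borel sets B ⊆ O, the Lebesgue measure of u(B) is at most G times the Lebesgue measure of B. Suppose moreover that the Lebesgue measure of u([t₁,t₂]) \ u([t₁,t₂] ∩ O) is zero. Then |u(t₂) − u(t₁)| ≤ G(t₂ − t₁). -/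
open MeasureTheory Set

/-- If `u` is continuous on `[t₁,t₂]`, `O ⊆ [t₁,t₂]` is relatively open, Borel subsets
`B` of `O` satisfy `L¹(u(B)) ≤ G · L¹(B)`, and the image of the complement of `O`
contributes zero measure (`L¹(u([t₁,t₂]) \ u([t₁,t₂] ∩ O)) = 0`), then
`|u(t₂) - u(t₁)| ≤ G (t₂ - t₁)`. -/
theorem endpoint_lipschitz_of_local_image_bound
    (t₁ t₂ : ℝ) (h12 : t₁ ≤ t₂) (u : ℝ → ℝ) (hu : ContinuousOn u (Icc t₁ t₂))
    (G : ℝ) (hG : 0 < G) (O : Set ℝ)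
    (hOopen : ∃ V : Set ℝ, IsOpen V ∧ O = V ∩ Icc t₁ t₂)
    (himg : ∀ B ⊆ O, MeasurableSet B →
      volume (u '' B) ≤ ENNReal.ofReal G * volume B)
    (hnull : volume (u '' Icc t₁ t₂ \ u '' (Icc t₁ t₂ ∩ O)) = 0) :
    |u t₂ - u t₁| ≤ G * (t₂ - t₁) := by
  obtain ⟨V, hV, hOV⟩ := hOopen
  have hsub : uIcc (u t₁) (u t₂) ⊆ u '' Icc t₁ t₂ := by
    have h := intermediate_value_uIcc (f := u) (a := t₁) (b := t₂)
      (by rwa [uIcc_of_le h12])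
    rwa [uIcc_of_le h12] at h
  have h1 : ENNReal.ofReal |u t₂ - u t₁| ≤ volume (u '' Icc t₁ t₂) := by
    calc ENNReal.ofReal |u t₂ - u t₁| = volume (uIcc (u t₁) (u t₂)) := by
          rw [uIcc, Real.volume_Icc, max_sub_min_eq_abs, abs_sub_comm]
      _ ≤ _ := measure_mono hsub
  have h2 : volume (u '' Icc t₁ t₂) ≤ volume (u '' (Icc t₁ t₂ ∩ O)) := by
    calc volume (u '' Icc t₁ t₂)
        ≤ volume (u '' (Icc t₁ t₂ ∩ O) ∪ (u '' Icc t₁ t₂ \ u '' (Icc t₁ t₂ ∩ O))) :=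
          measure_mono (fun x hx => by
            by_cases h : x ∈ u '' (Icc t₁ t₂ ∩ O)
            · exact Or.inl h
            · exact Or.inr ⟨hx, h⟩)
      _ ≤ volume (u '' (Icc t₁ t₂ ∩ O)) + volume (u '' Icc t₁ t₂ \ u '' (Icc t₁ t₂ ∩ O)) :=
          measure_union_le _ _
      _ = volume (u '' (Icc t₁ t₂ ∩ O)) := by rw [hnull, add_zero]
  have hmeas : MeasurableSet (Icc t₁ t₂ ∩ O) := by
    rw [hOV]
    exact measurableSet_Icc.inter (hV.measurableSet.inter measurableSet_Icc)
  have h3 : volume (u '' (Icc t₁ t₂ ∩ O)) ≤ ENNReal.ofReal G * volume (Icc t₁ t₂ ∩ O) :=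
    himg _ inter_subset_right hmeas
  have h4 : volume (Icc t₁ t₂ ∩ O) ≤ ENNReal.ofReal (t₂ - t₁) := by
    calc volume (Icc t₁ t₂ ∩ O) ≤ volume (Icc t₁ t₂) := measure_mono inter_subset_left
      _ = ENNReal.ofReal (t₂ - t₁) := Real.volume_Icc
  have key : ENNReal.ofReal |u t₂ - u t₁| ≤ ENNReal.ofReal (G * (t₂ - t₁)) := by
    calc ENNReal.ofReal |u t₂ - u t₁| ≤ ENNReal.ofReal G * volume (Icc t₁ t₂ ∩ O) :=
          le_trans h1 (le_trans h2 h3)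
      _ ≤ ENNReal.ofReal G * ENNReal.ofReal (t₂ - t₁) := by
          exact mul_le_mul_right h4 _
      _ = ENNReal.ofReal (G * (t₂ - t₁)) := by
          rw [← ENNReal.ofReal_mul hG.le]
  have hnn : 0 ≤ G * (t₂ - t₁) := mul_nonneg hG.le (by linarith)
  exact (ENNReal.ofReal_le_ofReal_iff hnn).mp key
end
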